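/- arXiv:2509.10269 — 3 statements merged into one kernel-verified Lean document; each statement's English description precedes it below -/
import Mathlib

section
/- Let S and R be commutative rings that are finitely generated ℂ-algebras, and let φ : S → R be a ℂ-algebra homomorphism making R a finitely generated S-module. Assume: (i) for any two distinct maximal ideals m₁ ≠ m₂ of R, the preimages φ⁻¹(m₁) and φ⁻¹(m₂) are distinct maximal ideals of S; and (ii) for every maximal ideal m of R, writing n = φ⁻¹(m), the map n/n² → m/m² induced by φ is surjective. Then φ is surjective. -/
/-!
Since `R` is a finite `S`-module, a maximal-submodule argument reduces the surjectivity of `φ` to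
`R = φ(S) + nR` for every maximal ideal `n` of `S`. Put `J = nR ≠ R`. Every maximal ideal over `J`
contracts to `n`, so by (i) there is exactly one, `m`, and hence `m ⊆ jacobson J`. Surjectivity on
cotangent spaces gives `m ⊆ J + m²`, and Nakayama's lemma turns this into `m = J`. As `R/m = ℂ`,
we get `R = ℂ + J ⊆ φ(S) + nR`.
-/

namespace Submodule

variable {R M : Type*} [CommRing R] [AddCommGroup M] [Module R M]

theorem eq_top_of_forall_isMaximal_sup_smul_eq_top [Module.Finite R M] (N : Submodule R M)
    (h : ∀ n : Ideal R, n.IsMaximal → N ⊔ n • ⊤ = ⊤) : N = ⊤ := by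
  have : IsCoatomic (Submodule R M) :=
    CompleteLattice.coatomic_of_top_compact ((fg_iff_compact _).mp Module.Finite.fg_top)
  refine (eq_top_or_exists_le_coatom N).resolve_right ?_
  rintro ⟨P, hP, hNP⟩
  have : IsSimpleModule R (M ⧸ P) := isSimpleModule_iff_isCoatom.mpr hP
  have hsmul : Module.annihilator R (M ⧸ P) • (⊤ : Submodule R M) ≤ P := by
    refine smul_le.mpr fun r hr x _ => ?_
    rw [← Quotient.mk_eq_zero, Quotient.mk_smul]
    exact Module.mem_annihilator.mp hr _
  refine hP.1 (top_le_iff.mp ?_)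
  rw [← h _ (IsSimpleModule.annihilator_isMaximal (M := M ⧸ P))]
  exact sup_le hNP hsmul

end Submodule

theorem RingHom.Finite.surjective_of_forall_isMaximal {S R : Type*} [CommRing S] [CommRing R]
    {f : S →+* R} (hf : f.Finite) (h : ∀ n : Ideal S, n.IsMaximal → ∀ r, ∃ s, r - f s ∈ n.map f) :
    Function.Surjective f := by
  let := f.toAlgebra
  have : Module.Finite S R := hf
  have hrange := (Algebra.linearMap S R).range.eq_top_of_forall_isMaximal_sup_smul_eq_top
    fun n hn => eq_top_iff.mpr fun r _ => ?_
  · exact fun r => hrange.ge (Submodule.mem_top (x := r))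
  obtain ⟨s, hs⟩ := h n hn r
  have hs' : r - f s ∈ n • (⊤ : Submodule S R) := by rwa [Ideal.smul_top_eq_map]
  have := Submodule.add_mem_sup (LinearMap.mem_range_self (Algebra.linearMap S R) s) hs'
  rwa [Algebra.linearMap_apply, RingHom.algebraMap_toAlgebra, add_sub_cancel] at this

namespace Ideal

theorem le_map_sup_sq_of_surjective_mapCotangent {R A B : Type*} [CommRing R] [CommRing A]
    [CommRing B] [Algebra R A] [Algebra R B] {I₁ : Ideal A} {I₂ : Ideal B} {f : A →ₐ[R] B}
    {h : I₁ ≤ I₂.comap f} (hsurj : Function.Surjective (mapCotangent I₁ I₂ f h)) :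
    I₂ ≤ I₁.map f ⊔ I₂ ^ 2 := by
  intro x hx
  obtain ⟨y, hy⟩ := hsurj (I₂.toCotangent ⟨x, hx⟩)
  obtain ⟨⟨s, hs⟩, rfl⟩ := I₁.toCotangent_surjective y
  rw [mapCotangent_toCotangent, toCotangent_eq] at hy
  rw [← sub_sub_cancel (f s) x]
  exact sub_mem (mem_sup_left (mem_map_of_mem f hs)) (mem_sup_right hy)

theorem le_of_le_sup_sq_of_le_jacobson {R : Type*} [CommRing R] {I m : Ideal R} (hm : m.FG)
    (hjac : m ≤ I.jacobson) (h : m ≤ I ⊔ m ^ 2) : m ≤ I := by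
  rw [pow_two, ← smul_eq_mul] at h
  calc m ≤ I ⊔ m • m := h
    _ = I ⊔ I • m := Submodule.sup_smul_eq_sup_smul_of_le_smul_of_le_jacobson hm hjac h
    _ ≤ I := sup_le le_rfl mul_le_left

theorem IsMaximal.comap_eq_of_map_le {R S F : Type*} [CommRing R] [CommRing S] [FunLike F R S]
    [RingHomClass F R S] {n : Ideal R} (hn : n.IsMaximal) (f : F) {m : Ideal S} (hm : m ≠ ⊤)
    (hle : n.map f ≤ m) : m.comap f = n :=
  (hn.eq_of_le (comap_ne_top f hm) (map_le_iff_le_comap.mp hle)).symm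

theorem Quotient.algebraMap_surjective_of_isAlgClosed {K R : Type*} [Field K] [IsAlgClosed K]
    [CommRing R] [Algebra K R] [Algebra.FiniteType K R] (m : Ideal R) [m.IsMaximal] :
    Function.Surjective (algebraMap K (R ⧸ m)) :=
  letI := Quotient.field m
  have : Algebra.FiniteType K (R ⧸ m) :=
    .of_surjective (Quotient.mkₐ K m) Quotient.mk_surjective
  have : Module.Finite K (R ⧸ m) := finite_of_finite_type_of_isJacobsonRing K _
  IsAlgClosed.algebraMap_bijective_of_isIntegral.2

end Ideal

theorem stmt_0_general (S R : Type*) [CommRing S] [CommRing R] [Algebra ℂ S] [Algebra ℂ R]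
    (hR : Algebra.FiniteType ℂ R)
    (φ : S →ₐ[ℂ] R) (hfin : φ.toRingHom.Finite)
    (hclosed : ∀ m₁ m₂ : Ideal R, m₁.IsMaximal → m₂.IsMaximal → m₁ ≠ m₂ →
      (m₁.comap φ).IsMaximal ∧ (m₂.comap φ).IsMaximal ∧ m₁.comap φ ≠ m₂.comap φ)
    (htangent : ∀ m : Ideal R, m.IsMaximal →
      Function.Surjective (Ideal.mapCotangent (m.comap φ) m φ le_rfl)) :
    Function.Surjective φ := by
  have : IsNoetherianRing R := Algebra.FiniteType.isNoetherianRing ℂ R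
  refine hfin.surjective_of_forall_isMaximal fun n hn r => ?_
  change ∃ s, r - φ s ∈ n.map φ
  by_cases hJ : n.map φ = ⊤
  · exact ⟨0, hJ ▸ Submodule.mem_top⟩
  obtain ⟨m, hm, hJm⟩ := Ideal.exists_le_maximal _ hJ
  have hcomap : ∀ m' : Ideal R, m'.IsMaximal → n.map φ ≤ m' → m'.comap φ = n :=
    fun m' hm' => hn.comap_eq_of_map_le φ hm'.ne_top
  have huniq : ∀ m' : Ideal R, m'.IsMaximal → n.map φ ≤ m' → m' = m := fun m' hm' hJm' =>
    not_not.mp fun hne => (hclosed m' m hm' hm hne).2.2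
      ((hcomap m' hm' hJm').trans (hcomap m hm hJm).symm)
  have hjac : m ≤ (n.map φ).jacobson := le_sInf fun m' ⟨hJm', hm'⟩ => (huniq m' hm' hJm').ge
  have hcot : m ≤ n.map φ ⊔ m ^ 2 :=
    hcomap m hm hJm ▸ Ideal.le_map_sup_sq_of_surjective_mapCotangent (htangent m hm)
  have hmJ : m ≤ n.map φ :=
    Ideal.le_of_le_sup_sq_of_le_jacobson (IsNoetherian.noetherian m) hjac hcot
  obtain ⟨c, hc⟩ :=
    Ideal.Quotient.algebraMap_surjective_of_isAlgClosed (K := ℂ) m (Ideal.Quotient.mk m r)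
  refine ⟨algebraMap ℂ S c, hmJ (Ideal.Quotient.eq.mp ?_)⟩
  rw [φ.commutes, ← hc]
  rfl

/-- **Lemma 4.7.** Let `S` and `R` be finitely generated `ℂ`-algebras and
`φ : S →ₐ[ℂ] R` a `ℂ`-algebra homomorphism making `R` a finitely generated
`S`-module. If the preimages of distinct maximal ideals of `R` are distinct
maximal ideals of `S`, and for every maximal ideal `m` of `R` with
`n = φ⁻¹(m)` the induced map `n/n² → m/m²` is surjective, then `φ` is
surjective. -/
theorem stmt_0 (S R : Type*) [CommRing S] [CommRing R] [Algebra ℂ S] [Algebra ℂ R]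
    (hS : Algebra.FiniteType ℂ S) (hR : Algebra.FiniteType ℂ R)
    (φ : S →ₐ[ℂ] R) (hfin : φ.toRingHom.Finite)
    (hclosed : ∀ m₁ m₂ : Ideal R, m₁.IsMaximal → m₂.IsMaximal → m₁ ≠ m₂ →
      (m₁.comap φ).IsMaximal ∧ (m₂.comap φ).IsMaximal ∧ m₁.comap φ ≠ m₂.comap φ)
    (htangent : ∀ m : Ideal R, m.IsMaximal →
      Function.Surjective (Ideal.mapCotangent (m.comap φ) m φ le_rfl)) :
    Function.Surjective φ :=
  stmt_0_general S R hR φ hfin hclosed htangent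
end

section
/- Let r ≥ 1 and let S = ℂ[[s₁, …, s_r]] be the formal power series ring in r variables over ℂ, with maximal ideal m = (s₁, …, s_r). Let J ⊆ I be ideals of S with I ⊆ m². Assume there exists an integer d ≥ 2 such that I ∩ m^d ⊆ m·I and such that J + m^d = I + m^d (as ideals of S). Then J = I. -/
/-!
Modularity turns `J ⊔ m ^ d = I ⊔ m ^ d` into `I = J ⊔ (I ⊓ m ^ d) ≤ J ⊔ m * I`. Since
`ℂ[[s₁, …, s_r]]` is a Noetherian local ring whose maximal ideal contains `m`, Nakayama's lemma
for the finitely generated ideal `I` gives `I ≤ J`.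
-/

open IsLocalRing

theorem MvPowerSeries.span_range_X_le_maximalIdeal {σ R : Type*} [CommRing R] [IsLocalRing R] :
    Ideal.span (Set.range (X : σ → MvPowerSeries σ R)) ≤ maximalIdeal (MvPowerSeries σ R) := by
  rw [Ideal.span_le]
  rintro _ ⟨i, rfl⟩
  rw [SetLike.mem_coe, mem_maximalIdeal, mem_nonunits_iff, isUnit_iff_constantCoeff,
    constantCoeff_X]
  exact not_isUnit_zero

theorem Ideal.le_sup_mul_of_le_sup_of_inf_le {R : Type*} [CommRing R] {I J a m : Ideal R}
    (hJI : J ≤ I) (hIa : I ≤ J ⊔ a) (ha : I ⊓ a ≤ m * I) : I ≤ J ⊔ m * I :=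
  calc I = J ⊔ I ⊓ a := by rw [inf_comm, ← sup_inf_assoc_of_le a hJI, inf_eq_right.mpr hIa]
    _ ≤ J ⊔ m * I := sup_le_sup_left ha J

theorem Ideal.eq_of_le_of_sup_eq_of_inf_le_mul {R : Type*} [CommRing R] [IsNoetherianRing R]
    {I J a m : Ideal R} (hm : m ≤ jacobson ⊥) (hJI : J ≤ I) (h : J ⊔ a = I ⊔ a)
    (ha : I ⊓ a ≤ m * I) : J = I :=
  le_antisymm hJI <| Submodule.le_of_le_smul_of_le_jacobson_bot (IsNoetherian.noetherian I) hm <|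
    le_sup_mul_of_le_sup_of_inf_le hJI (h ▸ le_sup_left) ha

theorem stmt_3_general (r : ℕ)
    (m I J : Ideal (MvPowerSeries (Fin r) ℂ))
    (hm : m = Ideal.span (Set.range (MvPowerSeries.X : Fin r → MvPowerSeries (Fin r) ℂ)))
    (hJI : J ≤ I)
    (d : ℕ)
    (h1 : I ⊓ m ^ d ≤ m * I)
    (h2 : J ⊔ m ^ d = I ⊔ m ^ d) :
    J = I := by
  have hmax : m ≤ Ideal.jacobson ⊥ := by
    rw [jacobson_eq_maximalIdeal ⊥ bot_ne_top, hm]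
    exact MvPowerSeries.span_range_X_le_maximalIdeal
  exact Ideal.eq_of_le_of_sup_eq_of_inf_le_mul hmax hJI h2 h1

/-- **Proposition 5.3(2), commutative algebra core.** Let
`S = ℂ[[s₁, …, s_r]]` with maximal ideal `m = (s₁, …, s_r)`, and let
`J ⊆ I ⊆ m²` be ideals. If for some `d ≥ 2` we have `I ∩ m^d ⊆ m·I` and
`J + m^d = I + m^d`, then `J = I`. -/
theorem stmt_3 (r : ℕ) (hr : 1 ≤ r)
    (m I J : Ideal (MvPowerSeries (Fin r) ℂ))
    (hm : m = Ideal.span (Set.range (MvPowerSeries.X : Fin r → MvPowerSeries (Fin r) ℂ)))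
    (hJI : J ≤ I) (hIm : I ≤ m ^ 2)
    (d : ℕ) (hd : 2 ≤ d)
    (h1 : I ⊓ m ^ d ≤ m * I)
    (h2 : J ⊔ m ^ d = I ⊔ m ^ d) :
    J = I :=
  stmt_3_general r m I J hm hJI d h1 h2
end

section
/- Let n₁ ≥ 3 and n₂ ≥ 3 be integers. Let a₁, …, a_{n₁−2} ∈ ℂ, b ∈ ℂ, and c₁, …, c_{n₂−1} ∈ ℂ. Let M be the 2 × (n₁+n₂−2) complex matrix whose first row is (a_{n₁−2}, a_{n₁−3}, …, a₁, b, c₁, …, c_{n₂−2}) and whose second row is (0, …, 0, c₁, c₂, …, c_{n₂−1}), where the second row begins with n₁−2 zeros. Then: (i) M has rank 0 if and only if all of the a_i, b, and c_j are zero; and (ii) M has rank ≤ 1 if and only if either (c_j = 0 for all 1 ≤ j ≤ n₂−1), or (a_i = 0 for all 1 ≤ i ≤ n₁−2 and there exist λ, μ ∈ ℂ with b = λ^{n₂−1} and c_j = λ^{n₂−1−j} · μ^{j} for all 1 ≤ j ≤ n₂−1). In every other case M has rank 2. -/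
/-!
A two-row matrix has rank at most one iff all its `2 × 2` minors vanish. If some `c_j ≠ 0`, the
minor pairing a column `(a_i, 0)` with the column `(c_{j-1}, c_j)` forces `a_i = 0`. The remaining
columns `(d_x, d_{x+1})`, where `d = (b, c₁, …, c_N)` and `N = n₂ - 1`, form a Hankel matrix whose
minors vanish exactly on the cone over the rational normal curve, `d_x = λ^(N-x) μ^x`: if
`d_N ≠ 0`, consecutive entries have the constant ratio `d_{N-1} / d_N`; if `d_N = 0`, the relations
`d_x² = d_{x-1} d_{x+1}` kill every `d_x` with `x ≥ 1`. An `N`-th root in `ℂ` then gives `λ, μ`.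
-/

namespace Matrix

variable {K : Type*} [Field K] {m n : Type*} [Fintype n]

theorem rank_eq_zero_iff [Finite m] (M : Matrix m n K) : M.rank = 0 ↔ M = 0 := by
  rw [rank_eq_finrank_span_row, Submodule.finrank_eq_zero, Submodule.span_eq_bot,
    Set.forall_mem_range]
  exact funext_iff.symm

theorem rank_le_one_iff_not_linearIndependent_row (M : Matrix (Fin 2) n K) :
    M.rank ≤ 1 ↔ ¬LinearIndependent K M.row := by
  have h2 : M.rank ≤ 2 := by simpa using M.rank_le_card_height
  rw [linearIndependent_iff_card_eq_finrank_span, Set.finrank, ← rank_eq_finrank_span_row,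
    Fintype.card_fin]
  omega

theorem rank_le_one_iff_forall_mul_eq_mul (M : Matrix (Fin 2) n K) :
    M.rank ≤ 1 ↔ ∀ j k, M 0 j * M 1 k = M 0 k * M 1 j := by
  rw [rank_le_one_iff_not_linearIndependent_row, linearIndependent_fin2]
  simp only [row_apply', not_and_or, not_not, not_forall]
  constructor
  · rintro (h | ⟨t, ht⟩) j k
    · simp [h]
    · simp only [← ht, Pi.smul_apply, smul_eq_mul]
      ring
  · intro h
    by_cases hM1 : M 1 = 0
    · exact Or.inl hM1
    obtain ⟨k, hk⟩ := Function.ne_iff.mp hM1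
    refine Or.inr ⟨M 0 k / M 1 k, funext fun j => ?_⟩
    rw [Pi.smul_apply, smul_eq_mul, div_mul_eq_mul_div, div_eq_iff hk, h]

end Matrix

theorem forall_le_update_zero_iff {α : Type*} {N : ℕ} {c f : ℕ → α} {b : α} :
    (∀ x ≤ N, Function.update c 0 b x = f x) ↔ b = f 0 ∧ ∀ x, 1 ≤ x → x ≤ N → c x = f x := by
  constructor
  · intro h
    refine ⟨by simpa using h 0 N.zero_le, fun x hx1 hx => ?_⟩
    rw [← h x hx, Function.update_of_ne (by omega)]
  · rintro ⟨hb, hc⟩ x hx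
    rcases Nat.eq_zero_or_pos x with rfl | hx0
    · simpa using hb
    · rw [Function.update_of_ne hx0.ne', hc x hx0 hx]

section HankelMinors

theorem mul_succ_eq_mul_succ_of_eq_pow_mul_pow {M : Type*} [CommMonoid M] {N : ℕ} {d : ℕ → M}
    {l μ : M} (hd : ∀ x ≤ N, d x = l ^ (N - x) * μ ^ x) {x y : ℕ} (hx : x < N) (hy : y < N) :
    d x * d (y + 1) = d y * d (x + 1) := by
  rw [hd x hx.le, hd _ hy, hd y hy.le, hd _ hx, mul_mul_mul_comm, ← pow_add, ← pow_add,
    mul_mul_mul_comm, ← pow_add, ← pow_add]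
  congr 2 <;> omega

variable {K : Type*} [Field K] {N : ℕ} {d : ℕ → K}
  (h : ∀ x y, x < N → y < N → d x * d (y + 1) = d y * d (x + 1))
include h

theorem eq_div_pow_mul_of_hankel_minors (hdN : d N ≠ 0) {x : ℕ} (hx : x ≤ N) :
    d x = (d (N - 1) / d N) ^ (N - x) * d N := by
  induction hx using Nat.decreasingInduction with
  | self => simp
  | of_succ k hk ih =>
    have hkN := h k (N - 1) hk (by omega)
    set t := d (N - 1) / d N
    have ht : d (N - 1) = t * d N := (div_mul_cancel₀ _ hdN).symm
    rw [Nat.sub_add_cancel (by omega), ih, ht] at hkN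
    rw [show N - k = N - (k + 1) + 1 by omega, pow_succ]
    apply mul_right_cancel₀ hdN
    linear_combination hkN

theorem eq_zero_of_hankel_minors (hdN : d N = 0) {x : ℕ} (hx1 : 1 ≤ x) (hx : x ≤ N) : d x = 0 := by
  induction hx using Nat.decreasingInduction with
  | self => exact hdN
  | of_succ k hk ih =>
    have hkk := h k (k - 1) hk (by omega)
    rw [Nat.sub_add_cancel hx1, ih (by omega), mul_zero] at hkk
    exact mul_self_eq_zero.mp hkk

theorem exists_eq_pow_mul_pow_of_hankel_minors [IsAlgClosed K] (hN : 1 ≤ N) :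
    ∃ l μ : K, ∀ x ≤ N, d x = l ^ (N - x) * μ ^ x := by
  by_cases hdN : d N = 0
  · obtain ⟨s, hs⟩ := IsAlgClosed.exists_pow_nat_eq (d 0) hN
    refine ⟨s, 0, fun x hx => ?_⟩
    rcases Nat.eq_zero_or_pos x with rfl | hx0
    · simp [hs]
    · rw [eq_zero_of_hankel_minors h hdN hx0 hx, zero_pow hx0.ne', mul_zero]
  · obtain ⟨s, hs⟩ := IsAlgClosed.exists_pow_nat_eq (d N) hN
    refine ⟨d (N - 1) / d N * s, s, fun x hx => ?_⟩
    rw [eq_div_pow_mul_of_hankel_minors h hdN hx, ← hs, mul_pow, mul_assoc, ← pow_add,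
      Nat.sub_add_cancel hx]

end HankelMinors

/-- With `p = n₁ - 2`, column `j < p` is `(a_{p-j}, 0)` and column `p + x` is `(d_x, d_{x+1})`,
where `d = Function.update c 0 b` is the sequence `(b, c₁, c₂, …)`. -/
def IsCompositionMatrix {K : Type*} [Zero K] {m : ℕ} (p : ℕ) (a : ℕ → K) (b : K) (c : ℕ → K)
    (M : Matrix (Fin 2) (Fin m) K) : Prop :=
  (∀ j : Fin m, M 0 j = if j.val < p then a (p - j.val)
    else if j.val = p then b else c (j.val - p)) ∧
  ∀ j : Fin m, M 1 j = if j.val < p then 0 else c (j.val - p + 1)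

namespace IsCompositionMatrix

section Zero

variable {K : Type*} [Zero K] {p m : ℕ} {a c : ℕ → K} {b : K} {M : Matrix (Fin 2) (Fin m) K}
  (hM : IsCompositionMatrix p a b c M)
include hM

theorem row_zero_of_lt {j : Fin m} (hj : j.val < p) : M 0 j = a (p - j) := by
  rw [hM.1, if_pos hj]

theorem row_one_of_lt {j : Fin m} (hj : j.val < p) : M 1 j = 0 := by
  rw [hM.2, if_pos hj]

theorem row_zero_of_le {j : Fin m} (hj : p ≤ j.val) : M 0 j = Function.update c 0 b (j - p) := by
  rw [hM.1, if_neg hj.not_gt]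
  rcases hj.eq_or_lt with hjp | hjp
  · simp [← hjp]
  · rw [if_neg hjp.ne', Function.update_of_ne (by omega)]

theorem row_one_of_le {j : Fin m} (hj : p ≤ j.val) :
    M 1 j = Function.update c 0 b (j - p + 1) := by
  rw [hM.2, if_neg hj.not_gt, Function.update_of_ne (Nat.succ_ne_zero _)]

end Zero

variable {K : Type*} [Field K] {p N m : ℕ} {a c : ℕ → K} {b : K} {M : Matrix (Fin 2) (Fin m) K}
  (hM : IsCompositionMatrix p a b c M) (hm : m = p + N) (hN : 1 ≤ N)
include hM hm

include hN in
theorem eq_zero_iff :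
    M = 0 ↔ (∀ i, 1 ≤ i → i ≤ p → a i = 0) ∧ b = 0 ∧ ∀ j, 1 ≤ j → j ≤ N → c j = 0 := by
  constructor
  · intro hM0
    refine ⟨fun i hi1 hip => ?_, (forall_le_update_zero_iff (f := fun _ => 0)).1 fun x hx => ?_⟩
    · have hi := hM.row_zero_of_lt (j := ⟨p - i, by omega⟩) (by simp; omega)
      rwa [hM0, Nat.sub_sub_self hip, eq_comm] at hi
    · rcases hx.lt_or_eq with hx | rfl
      · have hx := hM.row_zero_of_le (j := ⟨p + x, by omega⟩) (by simp)
        rwa [hM0, Nat.add_sub_cancel_left, eq_comm] at hx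
      · have hx := hM.row_one_of_le (j := ⟨p + (x - 1), by omega⟩) (by simp)
        rwa [hM0, Nat.add_sub_cancel_left, Nat.sub_add_cancel hN, eq_comm] at hx
  · rintro ⟨ha, hbc⟩
    have hd := (forall_le_update_zero_iff (f := fun _ => 0)).2 hbc
    have row0 : ∀ j, M 0 j = 0 := fun j => by
      have hj : j.val < p + N := hm ▸ j.isLt
      rcases lt_or_ge j.val p with hjp | hjp
      · rw [hM.row_zero_of_lt hjp, ha _ (by omega) (by omega)]
      · rw [hM.row_zero_of_le hjp, hd _ (by omega)]
    have row1 : ∀ j, M 1 j = 0 := fun j => by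
      have hj : j.val < p + N := hm ▸ j.isLt
      rcases lt_or_ge j.val p with hjp | hjp
      · rw [hM.row_one_of_lt hjp]
      · rw [hM.row_one_of_le hjp, hd _ (by omega)]
    ext i j
    fin_cases i
    exacts [row0 j, row1 j]

theorem hankel_minors_of_forall_mul_eq_mul (hmin : ∀ j k, M 0 j * M 1 k = M 0 k * M 1 j) :
    ∀ x y, x < N → y < N → Function.update c 0 b x * Function.update c 0 b (y + 1) =
      Function.update c 0 b y * Function.update c 0 b (x + 1) := fun x y hx hy => by
  have hxy := hmin ⟨p + x, by omega⟩ ⟨p + y, by omega⟩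
  simpa only [hM.row_zero_of_le (j := ⟨_, _⟩) (Nat.le_add_right p _),
    hM.row_one_of_le (j := ⟨_, _⟩) (Nat.le_add_right p _), Nat.add_sub_cancel_left] using hxy

theorem forall_mul_eq_mul_of_eq_pow_mul_pow (ha : ∀ i, 1 ≤ i → i ≤ p → a i = 0) {l μ : K}
    (hd : ∀ x ≤ N, Function.update c 0 b x = l ^ (N - x) * μ ^ x) :
    ∀ j k, M 0 j * M 1 k = M 0 k * M 1 j := by
  have col_zero : ∀ j : Fin m, j.val < p → M 0 j = 0 ∧ M 1 j = 0 := fun j hj =>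
    ⟨by rw [hM.row_zero_of_lt hj, ha _ (by omega) (by omega)], hM.row_one_of_lt hj⟩
  intro j k
  have hj : j.val < p + N := hm ▸ j.isLt
  have hk : k.val < p + N := hm ▸ k.isLt
  rcases lt_or_ge j.val p with hjp | hjp
  · simp [col_zero j hjp]
  rcases lt_or_ge k.val p with hkp | hkp
  · simp [col_zero k hkp]
  rw [hM.row_zero_of_le hjp, hM.row_one_of_le hkp, hM.row_zero_of_le hkp, hM.row_one_of_le hjp]
  exact mul_succ_eq_mul_succ_of_eq_pow_mul_pow hd (by omega) (by omega)

include hN in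
theorem forall_mul_eq_mul_iff [IsAlgClosed K] :
    (∀ j k, M 0 j * M 1 k = M 0 k * M 1 j) ↔
      (∀ j, 1 ≤ j → j ≤ N → c j = 0) ∨ ((∀ i, 1 ≤ i → i ≤ p → a i = 0) ∧
        ∃ l μ : K, b = l ^ N ∧ ∀ j, 1 ≤ j → j ≤ N → c j = l ^ (N - j) * μ ^ j) := by
  constructor
  · intro hmin
    by_cases hc : ∀ j, 1 ≤ j → j ≤ N → c j = 0
    · exact Or.inl hc
    push Not at hc
    obtain ⟨k, hk1, hkN, hck⟩ := hc
    have hMk : M 1 ⟨p + (k - 1), by omega⟩ = c k := by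
      rw [hM.row_one_of_le (by simp), Nat.add_sub_cancel_left, Nat.sub_add_cancel hk1,
        Function.update_of_ne (by omega)]
    refine Or.inr ⟨fun i hi1 hip => ?_, ?_⟩
    · have hi := hmin ⟨p - i, by omega⟩ ⟨p + (k - 1), by omega⟩
      rw [hMk, hM.row_zero_of_lt (j := ⟨p - i, _⟩) (by simp; omega),
        hM.row_one_of_lt (j := ⟨p - i, _⟩) (by simp; omega), mul_zero, Fin.val_mk,
        Nat.sub_sub_self hip] at hi
      exact (mul_eq_zero.mp hi).resolve_right hck
    obtain ⟨l, μ, hd⟩ :=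
      exists_eq_pow_mul_pow_of_hankel_minors (hM.hankel_minors_of_forall_mul_eq_mul hm hmin) hN
    obtain ⟨hb, hc⟩ := forall_le_update_zero_iff.mp hd
    exact ⟨l, μ, by simpa using hb, hc⟩
  · rintro (hc | ⟨ha, l, μ, hb, hc⟩)
    · have row1 : ∀ j, M 1 j = 0 := fun j => by
        have hj : j.val < p + N := hm ▸ j.isLt
        rcases lt_or_ge j.val p with hjp | hjp
        · rw [hM.row_one_of_lt hjp]
        · rw [hM.row_one_of_le hjp, Function.update_of_ne (by omega), hc _ (by omega) (by omega)]
      simp [row1]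
    · exact hM.forall_mul_eq_mul_of_eq_pow_mul_pow hm ha
        (forall_le_update_zero_iff.mpr ⟨by simpa using hb, hc⟩)

end IsCompositionMatrix

/-- **Lemma 8.3 (linear algebra content).** For `n₁, n₂ ≥ 3`, coefficients
`a₁, …, a_{n₁−2}`, `b`, `c₁, …, c_{n₂−1} ∈ ℂ`, let `M` be the `2`-row matrix
with first row `(a_{n₁−2}, …, a₁, b, c₁, …, c_{n₂−2})` and second row
`(0, …, 0, c₁, …, c_{n₂−1})` (with `n₁−2` initial zeros). Then `M` has
rank `0` iff all coefficients vanish; rank `≤ 1` iff either all `c_j`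
vanish, or all `a_i` vanish and `b = λ^{n₂−1}`, `c_j = λ^{n₂−1−j} μ^j` for
some `λ, μ ∈ ℂ`; and in every other case `M` has rank `2`. -/
theorem stmt_6 (n₁ n₂ : ℕ) (hn₁ : 3 ≤ n₁) (hn₂ : 3 ≤ n₂)
    (a : ℕ → ℂ) (b : ℂ) (c : ℕ → ℂ)
    (M : Matrix (Fin 2) (Fin (n₁ + n₂ - 3)) ℂ)
    (hM0 : ∀ j : Fin (n₁ + n₂ - 3),
      M 0 j = if j.val < n₁ - 2 then a (n₁ - 2 - j.val)
        else if j.val = n₁ - 2 then b else c (j.val - (n₁ - 2)))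
    (hM1 : ∀ j : Fin (n₁ + n₂ - 3),
      M 1 j = if j.val < n₁ - 2 then 0 else c (j.val - (n₁ - 2) + 1)) :
    (M.rank = 0 ↔
      (∀ i, 1 ≤ i → i ≤ n₁ - 2 → a i = 0) ∧ b = 0 ∧
        (∀ j, 1 ≤ j → j ≤ n₂ - 1 → c j = 0)) ∧
    (M.rank ≤ 1 ↔
      ((∀ j, 1 ≤ j → j ≤ n₂ - 1 → c j = 0) ∨
        ((∀ i, 1 ≤ i → i ≤ n₁ - 2 → a i = 0) ∧ ∃ lam mu : ℂ,
          b = lam ^ (n₂ - 1) ∧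
            ∀ j, 1 ≤ j → j ≤ n₂ - 1 → c j = lam ^ (n₂ - 1 - j) * mu ^ j))) ∧
    (¬ ((∀ j, 1 ≤ j → j ≤ n₂ - 1 → c j = 0) ∨
        ((∀ i, 1 ≤ i → i ≤ n₁ - 2 → a i = 0) ∧ ∃ lam mu : ℂ,
          b = lam ^ (n₂ - 1) ∧
            ∀ j, 1 ≤ j → j ≤ n₂ - 1 → c j = lam ^ (n₂ - 1 - j) * mu ^ j)) →
      M.rank = 2) := by
  have hM : IsCompositionMatrix (n₁ - 2) a b c M := ⟨hM0, hM1⟩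
  have hm : n₁ + n₂ - 3 = n₁ - 2 + (n₂ - 1) := by omega
  have hN : 1 ≤ n₂ - 1 := by omega
  have hrank_le_one :=
    M.rank_le_one_iff_forall_mul_eq_mul.trans (hM.forall_mul_eq_mul_iff hm hN)
  refine ⟨M.rank_eq_zero_iff.trans (hM.eq_zero_iff hm hN), hrank_le_one, fun h => ?_⟩
  have hrank_le_two : M.rank ≤ 2 := by simpa using M.rank_le_card_height
  have hrank_not_le_one := mt hrank_le_one.mp h
  omega
end
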